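/- For any matrices G_0, ..., G_{T-1} ∈ R^{m×n}, it holds that tr( (Σ_{t=0}^{T-1} G_t G_tᵀ)^{1/2} ) ≤ Σ_{j=1}^m sqrt( Σ_{i=1}^n Σ_{t=0}^{T-1} (G_t)_{j,i}² ) ≤ Σ_{j=1}^m Σ_{i=1}^n sqrt( Σ_{t=0}^{T-1} (G_t)_{j,i}² ), where (G_t)_{j,i} denotes the (j,i)-th entry of G_t; i.e., the proven ASGO bound is never worse than the full-matrix AdaGrad bound (up to the diameter factor). -/

import Mathlib

/-!
The square root `S` of `A = ∑ₜ Gₜ Gₜᵀ` is symmetric with `S² = A`, so `S_jj² ≤ ∑ₖ S_jk² = A_jj`,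
and summing `S_jj ≤ √A_jj` over `j` bounds the trace. The diagonal entry `A_jj` is the squared
norm of the `j`-th rows of all `Gₜ`, and the second inequality is the subadditivity of `√`.
-/

open Matrix
open scoped Classical

/-- The positive semidefinite square root of a positive semidefinite real matrix
(junk value `0` if the matrix is not positive semidefinite). -/
noncomputable def psdSqrt {k : ℕ} (X : Matrix (Fin k) (Fin k) ℝ) : Matrix (Fin k) (Fin k) ℝ :=
  if h : X.PosSemidef then
    (h.1.eigenvectorUnitary : Matrix (Fin k) (Fin k) ℝ) *
      diagonal (fun i => Real.sqrt (h.1.eigenvalues i)) *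
      (star (h.1.eigenvectorUnitary : Matrix (Fin k) (Fin k) ℝ))
  else 0

theorem Real.sqrt_add_le_add_sqrt (x y : ℝ) : √(x + y) ≤ √x + √y := by
  rw [Real.sqrt_le_iff]
  refine ⟨by positivity, ?_⟩
  nlinarith [Real.sq_sqrt' (x := x), Real.sq_sqrt' (x := y), le_max_left x 0, le_max_left y 0,
    mul_nonneg (Real.sqrt_nonneg x) (Real.sqrt_nonneg y)]

theorem Real.sqrt_sum_le_sum_sqrt {ι : Type*} (s : Finset ι) (f : ι → ℝ) :
    √(∑ i ∈ s, f i) ≤ ∑ i ∈ s, √(f i) :=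
  Finset.le_sum_of_subadditive _ Real.sqrt_zero.le Real.sqrt_add_le_add_sqrt s f

theorem Matrix.sum_mul_transpose_apply_self {ι m n : Type*} [Fintype n]
    (s : Finset ι) (G : ι → Matrix m n ℝ) (j : m) :
    (∑ t ∈ s, G t * (G t)ᵀ) j j = ∑ i, ∑ t ∈ s, G t j i ^ 2 := by
  simp only [Matrix.sum_apply, Matrix.mul_apply, Matrix.transpose_apply, sq]
  exact Finset.sum_comm

theorem Matrix.IsSymm.sq_apply_le_mul_self_apply {n : Type*} [Fintype n] {S : Matrix n n ℝ}
    (hS : S.IsSymm) (j : n) : S j j ^ 2 ≤ (S * S) j j := by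
  have hdiag : (S * S) j j = ∑ i, S j i ^ 2 := by
    simp only [mul_apply, sq, hS.apply]
  rw [hdiag]
  exact Finset.single_le_sum (f := fun i => S j i ^ 2) (fun i _ => sq_nonneg _) (Finset.mem_univ j)

namespace psdSqrt

variable {k : ℕ}

theorem eq_conjStarAlgAut {X : Matrix (Fin k) (Fin k) ℝ} (hX : X.PosSemidef) :
    psdSqrt X = Unitary.conjStarAlgAut ℝ _ hX.1.eigenvectorUnitary
      (diagonal fun i => √(hX.1.eigenvalues i)) :=
  dif_pos hX

theorem mul_self {X : Matrix (Fin k) (Fin k) ℝ} (hX : X.PosSemidef) :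
    psdSqrt X * psdSqrt X = X := by
  rw [eq_conjStarAlgAut hX, ← map_mul, diagonal_mul_diagonal]
  conv_rhs => rw [hX.1.spectral_theorem]
  congr 2
  ext i
  simp [Real.mul_self_sqrt (hX.eigenvalues_nonneg i)]

theorem posSemidef (X : Matrix (Fin k) (Fin k) ℝ) : (psdSqrt X).PosSemidef := by
  unfold psdSqrt
  split_ifs
  · exact (PosSemidef.diagonal fun i => Real.sqrt_nonneg _).mul_mul_conjTranspose_same _
  · exact PosSemidef.zero

theorem trace_le_sum_sqrt_diag (X : Matrix (Fin k) (Fin k) ℝ) :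
    (psdSqrt X).trace ≤ ∑ j, √(X j j) := by
  by_cases hX : X.PosSemidef
  · have hsymm : (psdSqrt X).IsSymm := isHermitian_iff_isSymm.mp (posSemidef X).1
    refine Finset.sum_le_sum fun j _ => Real.le_sqrt_of_sq_le ?_
    calc psdSqrt X j j ^ 2 ≤ (psdSqrt X * psdSqrt X) j j := hsymm.sq_apply_le_mul_self_apply j
      _ = X j j := by rw [mul_self hX]
  · rw [psdSqrt, dif_neg hX, trace_zero]
    exact Finset.sum_nonneg fun j _ => Real.sqrt_nonneg _

end psdSqrt

/-- for any matrices `G_0, ..., G_{T-1} ∈ ℝ^{m×n}`,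
`tr((∑_t G_t G_tᵀ)^{1/2}) ≤ ∑_j sqrt(∑_i ∑_t (G_t)_{j,i}²) ≤ ∑_j ∑_i sqrt(∑_t (G_t)_{j,i}²)`:
the proven ASGO bound is never worse than the full-matrix AdaGrad bound. -/
theorem stmt13 (m n T : ℕ) (G : Fin T → Matrix (Fin m) (Fin n) ℝ) :
    (psdSqrt (∑ t, G t * (G t)ᵀ)).trace ≤ ∑ j, Real.sqrt (∑ i, ∑ t, (G t j i) ^ 2) ∧
    ∑ j, Real.sqrt (∑ i, ∑ t, (G t j i) ^ 2) ≤ ∑ j, ∑ i, Real.sqrt (∑ t, (G t j i) ^ 2) := by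
  refine ⟨?_, Finset.sum_le_sum fun j _ => Real.sqrt_sum_le_sum_sqrt _ _⟩
  calc (psdSqrt (∑ t, G t * (G t)ᵀ)).trace
      ≤ ∑ j, √((∑ t, G t * (G t)ᵀ) j j) := psdSqrt.trace_le_sum_sqrt_diag _
    _ = ∑ j, √(∑ i, ∑ t, G t j i ^ 2) := by simp_rw [sum_mul_transpose_apply_self]
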